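/- Let n ≥ 1, let a be a signed permutation on [n], and let a′ = ρ_{i,j} ⋄ a for some reversal ρ_{i,j} with 1 ≤ i ≤ j ≤ n. Let p be the (2n+1)-cycle (0, −1, −2, …, −n, n, n−1, …, 1) on [n]± and let s̃(·) denote the (2n+1)-cycle (0, a₁, …, aₙ, −aₙ, …, −a₁) associated to a signed permutation. Then C(p ∘ s̃(a′)) ≤ C(p ∘ s̃(a)) + 2, i.e., a single reversal increases the number of cycles of p ∘ s̃ by at most 2. -/
import Mathlib


/-- Number of cycles of a permutation of a finite set, fixed points counting as 1-cycles. -/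
def cycleCount {α : Type*} [Fintype α] [DecidableEq α] (π : Equiv.Perm α) : ℕ :=
  π.cycleType.card + (Finset.univ.filter fun x => π x = x).card

/-- The set `[n]± = {-n, …, -1, 0, 1, …, n}` of integers. -/
abbrev Ipm (n : ℕ) : Type := {j : ℤ // j ∈ Finset.Icc (-(n : ℤ)) (n : ℤ)}

/-- The sequence `s(a) = 0, a₁, …, aₙ, -aₙ, …, -a₁` (indices `0, …, 2n`). -/
def seq (n : ℕ) (a : ℕ → ℤ) (k : ℕ) : ℤ :=
  if k = 0 then 0 else if k ≤ n then a k else -a (2 * n + 1 - k)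

/-- `a₁, …, aₙ` is a signed permutation on `[n]`:
`|a₁|, …, |aₙ|` is a permutation of `1, …, n`. -/
def IsSignedPerm (n : ℕ) (a : ℕ → ℤ) : Prop :=
  (Finset.Icc 1 n).image (fun k => |a k|) = Finset.Icc (1 : ℤ) (n : ℤ)

open Equiv Equiv.Perm Finset

section Generic
variable {α : Type*} [Fintype α] [DecidableEq α]

def orb (f : Perm α) (z : α) : Finset α := Finset.univ.filter (fun w => f.SameCycle z w)

lemma mem_orb {f : Perm α} {z w : α} : w ∈ orb f z ↔ f.SameCycle z w := by
  simp [orb]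

lemma orb_self (f : Perm α) (z : α) : z ∈ orb f z := mem_orb.2 (SameCycle.refl f z)

lemma orb_eq_of_mem {f : Perm α} {z w : α} (h : w ∈ orb f z) : orb f w = orb f z := by
  rw [mem_orb] at h
  ext u
  simp only [mem_orb]
  exact ⟨fun h' => h.trans h', fun h' => h.symm.trans h'⟩

lemma cycleCount_eq_card_orbs (f : Perm α) :
    cycleCount f = (Finset.univ.image (orb f)).card := by
  classical
  have hunion : (Finset.univ.image (orb f)) =
      (f.support.image (orb f)) ∪ ((Finset.univ.filter fun x => f x = x).image (orb f)) := by
    ext s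
    simp only [mem_union, mem_image, mem_filter, mem_support, mem_univ, true_and]
    constructor
    · rintro ⟨z, rfl⟩
      by_cases h : f z = z
      · exact Or.inr ⟨z, h, rfl⟩
      · exact Or.inl ⟨z, h, rfl⟩
    · rintro (⟨z, _, rfl⟩ | ⟨z, _, rfl⟩) <;> exact ⟨z, rfl⟩
  have horbfix : ∀ z, f z = z → orb f z = {z} := by
    intro z hz
    ext w
    simp only [mem_orb, Finset.mem_singleton, SameCycle]
    constructor
    · rintro ⟨i, rfl⟩
      exact zpow_apply_eq_self_of_apply_eq_self hz i
    · rintro rfl; exact ⟨0, rfl⟩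
  have hfiximg : ((Finset.univ.filter fun x => f x = x).image (orb f)).card =
      (Finset.univ.filter fun x => f x = x).card := by
    apply Finset.card_image_of_injOn
    intro z hz w hw h
    simp only [Finset.coe_filter, Set.mem_setOf_eq, Finset.mem_coe, Finset.mem_filter] at hz hw
    rw [horbfix z hz.2, horbfix w hw.2] at h
    exact Finset.singleton_injective h
  have horbsupp : ∀ z ∈ f.support, orb f z = (f.cycleOf z).support := by
    intro z hz
    ext w
    rw [mem_orb, mem_support_cycleOf_iff]
    exact ⟨fun h => ⟨h, hz⟩, fun h => h.1⟩
  have hsuppimg : (f.support.image (orb f)) = (f.cycleFactorsFinset.image Equiv.Perm.support) := by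
    ext s
    simp only [mem_image]
    constructor
    · rintro ⟨z, hz, rfl⟩
      exact ⟨f.cycleOf z, cycleOf_mem_cycleFactorsFinset_iff.2 hz, (horbsupp z hz).symm⟩
    · rintro ⟨c, hc, rfl⟩
      have hc' := mem_cycleFactorsFinset_iff.1 hc
      obtain ⟨z, hz⟩ := hc'.1.nonempty_support
      have hzf : z ∈ f.support := mem_cycleFactorsFinset_support_le hc hz
      refine ⟨z, hzf, ?_⟩
      rw [horbsupp z hzf, cycle_is_cycleOf hz hc]
  have hsuppcard : (f.cycleFactorsFinset.image Equiv.Perm.support).card =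
      f.cycleFactorsFinset.card := by
    apply Finset.card_image_of_injOn
    intro c hc d hd h
    by_contra hne
    have hdisj := f.cycleFactorsFinset_pairwise_disjoint hc hd hne
    have hc' := mem_cycleFactorsFinset_iff.1 hc
    obtain ⟨z, hz⟩ := hc'.1.nonempty_support
    have hzd : z ∈ d.support := h ▸ hz
    rw [Equiv.Perm.mem_support] at hz hzd
    rcases hdisj z with h1 | h1
    · exact hz h1
    · exact hzd h1
  have hdisj : Disjoint (f.support.image (orb f))
      ((Finset.univ.filter fun x => f x = x).image (orb f)) := by
    rw [Finset.disjoint_left]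
    rintro s hs ht
    simp only [mem_image, mem_filter, mem_univ, true_and] at hs ht
    obtain ⟨z, hz, rfl⟩ := hs
    obtain ⟨w, hw, he⟩ := ht
    rw [horbfix w hw] at he
    have := orb_self f z
    rw [← he] at this
    rw [Finset.mem_singleton] at this
    subst this
    rw [mem_support] at hz
    exact hz hw
  have hct : f.cycleType.card = f.cycleFactorsFinset.card := by
    rw [cycleType_def, Multiset.card_map]; rfl
  rw [cycleCount, hunion, Finset.card_union_of_disjoint hdisj, hsuppimg, hsuppcard, hfiximg, hct]

lemma orb_mul_swap_eq {f : Perm α} {x y z : α} (hx : x ∉ orb f z) (hy : y ∉ orb f z) :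
    orb (f * Equiv.swap x y) z = orb f z := by
  set g := f * Equiv.swap x y with hg
  have hag : ∀ w ∈ orb f z, g w = f w := by
    intro w hw
    have hwx : w ≠ x := fun h => hx (h ▸ hw)
    have hwy : w ≠ y := fun h => hy (h ▸ hw)
    simp [hg, Equiv.swap_apply_of_ne_of_ne hwx hwy]
  have hpow : ∀ i : ℕ, (g ^ i) z = (f ^ i) z := by
    intro i
    induction i with
    | zero => rfl
    | succ i ih =>
        have hmem : (f ^ i) z ∈ orb f z := mem_orb.2 ⟨(i : ℤ), by simp [zpow_natCast]⟩
        have e1 : (g ^ (i+1)) z = g ((g ^ i) z) := by rw [pow_succ']; rfl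
        have e2 : (f ^ (i+1)) z = f ((f ^ i) z) := by rw [pow_succ']; rfl
        rw [e1, e2, ih, hag _ hmem]
  ext w
  simp only [mem_orb]
  constructor
  · intro h
    obtain ⟨i, _, rfl⟩ := h.exists_pow_eq'
    exact ⟨(i : ℤ), by simp [zpow_natCast, hpow i]⟩
  · intro h
    obtain ⟨i, _, rfl⟩ := h.exists_pow_eq'
    exact ⟨(i : ℤ), by simp [zpow_natCast, hpow i]⟩

lemma cycleCount_mul_swap_le (f : Perm α) (x y : α) :
    cycleCount (f * Equiv.swap x y) ≤ cycleCount f + 1 := by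
  classical
  set g := f * Equiv.swap x y with hg
  have hfg : f = g * Equiv.swap x y := by
    rw [hg, mul_assoc, Equiv.swap_mul_self, mul_one]
  set O := Finset.univ.image (orb f) with hO
  set O' := Finset.univ.image (orb g) with hO'
  set C := O.filter (fun s => x ∉ s ∧ y ∉ s) with hC
  have hsub : O' ⊆ insert (orb g x) (insert (orb g y) C) := by
    intro s hs
    simp only [hO', mem_image, mem_univ, true_and] at hs
    obtain ⟨z, rfl⟩ := hs
    by_cases hx : x ∈ orb g z
    · rw [Finset.mem_insert]; left; exact (orb_eq_of_mem hx).symm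
    by_cases hy : y ∈ orb g z
    · rw [Finset.mem_insert, Finset.mem_insert]
      right; left; exact (orb_eq_of_mem hy).symm
    · have : orb f z = orb g z := by
        conv_lhs => rw [hfg]
        exact orb_mul_swap_eq hx hy
      rw [Finset.mem_insert, Finset.mem_insert]
      right; right
      rw [hC, Finset.mem_filter]
      refine ⟨?_, by rw [← this] at hx hy ⊢; exact ⟨hx, hy⟩⟩
      rw [hO, mem_image]
      exact ⟨z, mem_univ z, this⟩
  have h1 : O'.card ≤ C.card + 2 := by
    calc O'.card ≤ (insert (orb g x) (insert (orb g y) C)).card := Finset.card_le_card hsub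
    _ ≤ (insert (orb g y) C).card + 1 := Finset.card_insert_le _ _
    _ ≤ C.card + 1 + 1 := by have := Finset.card_insert_le (orb g y) C; omega
  have h2 : C.card + 1 ≤ O.card := by
    have hxo : orb f x ∈ O := by rw [hO, mem_image]; exact ⟨x, mem_univ x, rfl⟩
    have hxc : orb f x ∉ C := by
      rw [hC, Finset.mem_filter]
      intro h
      exact h.2.1 (orb_self f x)
    have : insert (orb f x) C ⊆ O := by
      intro s hs
      rw [Finset.mem_insert] at hs
      rcases hs with rfl | hs
      · exact hxo
      · exact Finset.mem_of_mem_filter s hs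
    calc C.card + 1 = (insert (orb f x) C).card := (Finset.card_insert_of_notMem hxc).symm
    _ ≤ O.card := Finset.card_le_card this
  have e1 : cycleCount g = O'.card := by rw [hO', cycleCount_eq_card_orbs]
  have e2 : cycleCount f = O.card := by rw [hO, cycleCount_eq_card_orbs]
  omega

lemma cycleCount_mul_swap_swap_le (f : Perm α) (x y u v : α) :
    cycleCount (f * Equiv.swap x y * Equiv.swap u v) ≤ cycleCount f + 2 := by
  calc cycleCount (f * Equiv.swap x y * Equiv.swap u v)
      ≤ cycleCount (f * Equiv.swap x y) + 1 := cycleCount_mul_swap_le _ u v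
  _ ≤ cycleCount f + 1 + 1 := by have := cycleCount_mul_swap_le f x y; omega

end Generic

section SeqLemmas

variable {n : ℕ} {b : ℕ → ℤ}

lemma abs_bounds_of_signed (h : IsSignedPerm n b) (k : ℕ)
    (h1 : 1 ≤ k) (h2 : k ≤ n) : 1 ≤ |b k| ∧ |b k| ≤ (n:ℤ) := by
  have : |b k| ∈ Finset.Icc (1:ℤ) n := by
    rw [← h]; exact Finset.mem_image.2 ⟨k, Finset.mem_Icc.2 ⟨h1, h2⟩, rfl⟩
  exact Finset.mem_Icc.1 this

lemma seq_mem_Icc (h : IsSignedPerm n b) {k : ℕ} (hk : k ≤ 2*n) :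
    seq n b k ∈ Finset.Icc (-(n : ℤ)) (n : ℤ) := by
  rw [Finset.mem_Icc]
  unfold seq
  split_ifs with h0 h1
  · omega
  · have hb := abs_bounds_of_signed h k (by omega) h1
    have := abs_le.1 hb.2
    omega
  · have hb := abs_bounds_of_signed h (2*n+1-k) (by omega) (by omega)
    have := abs_le.1 hb.2
    omega

lemma abs_injOn_of_signed (h : IsSignedPerm n b) :
    ∀ k l : ℕ, 1 ≤ k → k ≤ n → 1 ≤ l → l ≤ n → |b k| = |b l| → k = l := by
  have hcard : ((Finset.Icc 1 n).image (fun k => |b k|)).card = (Finset.Icc 1 n).card := by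
    rw [h, Nat.card_Icc, Int.card_Icc]
    omega
  have hinj := Finset.injOn_of_card_image_eq hcard
  intro k l h1 h2 h3 h4 he
  exact hinj (by simp [Finset.mem_Icc]; omega) (by simp [Finset.mem_Icc]; omega) he

lemma seq_inj (h : IsSignedPerm n b) :
    ∀ k, k ≤ 2*n → ∀ l, l ≤ 2*n → seq n b k = seq n b l → k = l := by
  have habs := abs_bounds_of_signed h
  have hinj := abs_injOn_of_signed h
  intro k hk l hl he
  unfold seq at he
  split_ifs at he with e1 e2 e3 e4 e5 e6 e7 e8
  · omega
  · exfalso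
    have hb := habs l (by omega) e3
    rw [← he] at hb
    simp at hb
  · exfalso
    have hb := habs (2*n+1-l) (by omega) (by omega)
    have h0 : b (2*n+1-l) = 0 := by omega
    rw [h0] at hb
    simp at hb
  · exfalso
    have hb := habs k (by omega) e4
    rw [he] at hb
    simp at hb
  · exact hinj k l (by omega) e4 (by omega) e6 (congrArg abs he)
  · exfalso
    have hk2 : k = 2*n+1-l := by
      apply hinj k (2*n+1-l) (by omega) e4 (by omega) (by omega)
      rw [he, abs_neg]
    rw [← hk2] at he
    have hb := habs k (by omega) e4
    have h0 : b k = 0 := by omega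
    rw [h0] at hb
    simp at hb
  · exfalso
    have hb := habs (2*n+1-k) (by omega) (by omega)
    have h0 : b (2*n+1-k) = 0 := by omega
    rw [h0] at hb
    simp at hb
  · exfalso
    have hl2 : l = 2*n+1-k := by
      apply hinj l (2*n+1-k) (by omega) e8 (by omega) (by omega)
      rw [← he, abs_neg]
    rw [← hl2] at he
    have hb := habs l (by omega) e8
    have h0 : b l = 0 := by omega
    rw [h0] at hb
    simp at hb
  · have hbe : b (2*n+1-k) = b (2*n+1-l) := by omega
    have := hinj (2*n+1-k) (2*n+1-l) (by omega) (by omega) (by omega) (by omega)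
      (congrArg abs hbe)
    omega

lemma seq_surj (h : IsSignedPerm n b) (x : Ipm n) :
    ∃ k, k ≤ 2*n ∧ (x : ℤ) = seq n b k := by
  have hsub : (Finset.range (2*n+1)).image (seq n b) ⊆ Finset.Icc (-(n:ℤ)) n := by
    intro y hy
    obtain ⟨k, hk, rfl⟩ := Finset.mem_image.1 hy
    exact seq_mem_Icc h (by simpa [Nat.lt_succ_iff] using Finset.mem_range.1 hk)
  have hcard : ((Finset.range (2*n+1)).image (seq n b)).card = 2*n+1 := by
    rw [Finset.card_image_of_injOn, Finset.card_range]
    intro k hk l hl he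
    simp only [Finset.coe_range, Set.mem_Iio] at hk hl
    exact seq_inj h k (by omega) l (by omega) he
  have heq : (Finset.range (2*n+1)).image (seq n b) = Finset.Icc (-(n:ℤ)) n := by
    apply Finset.eq_of_subset_of_card_le hsub
    rw [hcard, Int.card_Icc]
    omega
  have hx : (x : ℤ) ∈ (Finset.range (2*n+1)).image (seq n b) := by
    rw [heq]; exact x.2
  obtain ⟨k, hk, he⟩ := Finset.mem_image.1 hx
  exact ⟨k, by simpa [Nat.lt_succ_iff] using Finset.mem_range.1 hk, he.symm⟩

def elt (n : ℕ) (b : ℕ → ℤ) (h : IsSignedPerm n b) (k : ℕ) : Ipm n :=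
  ⟨seq n b (k % (2*n+1)), seq_mem_Icc h (Nat.lt_succ_iff.mp (Nat.mod_lt _ (Nat.succ_pos _)))⟩

lemma elt_val (h : IsSignedPerm n b) (k : ℕ) :
    (elt n b h k : ℤ) = seq n b (k % (2*n+1)) := rfl

lemma elt_eqmod (h : IsSignedPerm n b) {t u : ℕ} (he : t % (2*n+1) = u % (2*n+1)) :
    elt n b h t = elt n b h u := by
  apply Subtype.ext
  show seq n b (t % (2*n+1)) = seq n b (u % (2*n+1))
  rw [he]

lemma elt_ne (h : IsSignedPerm n b) {t u : ℕ} (ht : t ≤ 2*n) (hu : u ≤ 2*n)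
    (hne : t ≠ u) : elt n b h t ≠ elt n b h u := by
  intro he
  apply hne
  have hv : seq n b (t % (2*n+1)) = seq n b (u % (2*n+1)) := congrArg Subtype.val he
  rw [Nat.mod_eq_of_lt (by omega), Nat.mod_eq_of_lt (by omega)] at hv
  exact seq_inj h t ht u hu hv

lemma elt_st (h : IsSignedPerm n b) (st : Equiv.Perm (Ipm n))
    (hst : ∀ k ≤ 2 * n, ∀ x : Ipm n, (x : ℤ) = seq n b k →
      ((st x : ℤ) = seq n b ((k + 1) % (2 * n + 1)))) (t : ℕ) :
    st (elt n b h t) = elt n b h (t+1) := by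
  apply Subtype.ext
  have hmod : t % (2*n+1) ≤ 2*n := Nat.lt_succ_iff.mp (Nat.mod_lt _ (Nat.succ_pos _))
  have h1 := hst (t % (2*n+1)) hmod (elt n b h t) rfl
  rw [h1]
  show seq n b ((t % (2*n+1) + 1) % (2*n+1)) = seq n b ((t+1) % (2*n+1))
  rw [Nat.mod_add_mod]

end SeqLemmas

lemma signed_reverse {n i j : ℕ} {a a' : ℕ → ℤ} (hsigned : IsSignedPerm n a)
    (hi : 1 ≤ i) (hij : i ≤ j) (hjn : j ≤ n)
    (ha' : ∀ k, a' k = if i ≤ k ∧ k ≤ j then -a (i + j - k) else a k) :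
    IsSignedPerm n a' := by
  unfold IsSignedPerm at *
  apply Finset.Subset.antisymm
  · intro x hx
    obtain ⟨k, hk, rfl⟩ := Finset.mem_image.1 hx
    rw [Finset.mem_Icc] at hk
    rw [ha' k]
    split_ifs with h
    · rw [abs_neg, ← hsigned]
      exact Finset.mem_image.2 ⟨i+j-k, Finset.mem_Icc.2 (by omega), rfl⟩
    · rw [← hsigned]
      exact Finset.mem_image.2 ⟨k, Finset.mem_Icc.2 (by omega), rfl⟩
  · intro x hx
    rw [← hsigned] at hx
    obtain ⟨l, hl, rfl⟩ := Finset.mem_image.1 hx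
    rw [Finset.mem_Icc] at hl
    by_cases hmem : i ≤ l ∧ l ≤ j
    · refine Finset.mem_image.2 ⟨i+j-l, Finset.mem_Icc.2 (by omega), ?_⟩
      rw [ha', if_pos (by omega)]
      have he : i+j-(i+j-l) = l := by omega
      rw [he, abs_neg]
    · exact Finset.mem_image.2 ⟨l, Finset.mem_Icc.2 (by omega), by rw [ha', if_neg hmem]⟩

def mIdx (n i j k : ℕ) : ℕ :=
  if k < i then k
  else if k ≤ j then 2*n+1+k-(i+j)
  else if k ≤ 2*n-j then k
  else if k ≤ 2*n+1-i then i+j+k-(2*n+1)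
  else k

lemma mIdx_le {n i j : ℕ} (hi : 1 ≤ i) (hij : i ≤ j) (hjn : j ≤ n) {k : ℕ}
    (hk : k ≤ 2*n) : mIdx n i j k ≤ 2*n := by
  simp only [mIdx]; split_ifs <;> omega

lemma seq_reverse_eq {n i j : ℕ} {a a' : ℕ → ℤ}
    (hi : 1 ≤ i) (hij : i ≤ j) (hjn : j ≤ n) (hn : 1 ≤ n)
    (ha' : ∀ k, a' k = if i ≤ k ∧ k ≤ j then -a (i + j - k) else a k)
    {t : ℕ} (ht : t ≤ 2*n) : seq n a' t = seq n a (mIdx n i j t) := by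
  by_cases h0 : t = 0
  · subst h0
    have hm0 : mIdx n i j 0 = 0 := by simp only [mIdx]; split_ifs <;> omega
    rw [hm0]
    unfold seq
    simp
  · by_cases h1 : t < i
    · have hmt : mIdx n i j t = t := by simp only [mIdx]; split_ifs <;> omega
      have hL : seq n a' t = a t := by
        unfold seq; rw [if_neg h0, if_pos (by omega : t ≤ n), ha', if_neg (by omega)]
      have hR : seq n a t = a t := by
        unfold seq; rw [if_neg h0, if_pos (by omega : t ≤ n)]
      rw [hmt, hL, hR]
    · by_cases h2 : t ≤ j
      · have hmt : mIdx n i j t = 2*n+1+t-(i+j) := by simp only [mIdx]; split_ifs <;> omega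
        have hL : seq n a' t = -a (i+j-t) := by
          unfold seq; rw [if_neg h0, if_pos (by omega : t ≤ n), ha', if_pos (by omega)]
        have hR : seq n a (2*n+1+t-(i+j)) = -a (i+j-t) := by
          unfold seq
          rw [if_neg (by omega : ¬ 2*n+1+t-(i+j) = 0), if_neg (by omega : ¬ 2*n+1+t-(i+j) ≤ n)]
          have he : 2*n+1-(2*n+1+t-(i+j)) = i+j-t := by omega
          rw [he]
        rw [hmt, hL, hR]
      · by_cases h3 : t ≤ n
        · have hmt : mIdx n i j t = t := by simp only [mIdx]; split_ifs <;> omega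
          have hL : seq n a' t = a t := by
            unfold seq; rw [if_neg h0, if_pos h3, ha', if_neg (by omega)]
          have hR : seq n a t = a t := by
            unfold seq; rw [if_neg h0, if_pos h3]
          rw [hmt, hL, hR]
        · by_cases h4 : t ≤ 2*n-j
          · have hmt : mIdx n i j t = t := by simp only [mIdx]; split_ifs <;> omega
            have hL : seq n a' t = -a (2*n+1-t) := by
              unfold seq; rw [if_neg h0, if_neg h3, ha', if_neg (by omega)]
            have hR : seq n a t = -a (2*n+1-t) := by
              unfold seq; rw [if_neg h0, if_neg h3]
            rw [hmt, hL, hR]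
          · by_cases h5 : t ≤ 2*n+1-i
            · have hmt : mIdx n i j t = i+j+t-(2*n+1) := by
                simp only [mIdx]; split_ifs <;> omega
              have hL : seq n a' t = a (i+j+t-(2*n+1)) := by
                unfold seq
                rw [if_neg h0, if_neg h3, ha', if_pos (by omega), neg_neg]
                have he : i+j-(2*n+1-t) = i+j+t-(2*n+1) := by omega
                rw [he]
              have hR : seq n a (i+j+t-(2*n+1)) = a (i+j+t-(2*n+1)) := by
                unfold seq
                rw [if_neg (by omega : ¬ i+j+t-(2*n+1) = 0), if_pos (by omega : i+j+t-(2*n+1) ≤ n)]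
              rw [hmt, hL, hR]
            · have hmt : mIdx n i j t = t := by simp only [mIdx]; split_ifs <;> omega
              have hL : seq n a' t = -a (2*n+1-t) := by
                unfold seq; rw [if_neg h0, if_neg h3, ha', if_neg (by omega)]
              have hR : seq n a t = -a (2*n+1-t) := by
                unfold seq; rw [if_neg h0, if_neg h3]
              rw [hmt, hL, hR]

/-- Let `a` be a signed permutation on `[n]` and `a' = ρ_{i,j} ⋄ a`
for some reversal `ρ_{i,j}` with `1 ≤ i ≤ j ≤ n`.  Let `p` be the `(2n+1)`-cycle
`(0, -1, …, -n, n, n-1, …, 1)` on `[n]±`, and let `s̃(a)`, `s̃(a')` be the `(2n+1)`-cycles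
`(0, a₁, …, aₙ, -aₙ, …, -a₁)` and `(0, a'₁, …, a'ₙ, -a'ₙ, …, -a'₁)` on `[n]±`.  Then
`C(p ∘ s̃(a')) ≤ C(p ∘ s̃(a)) + 2`: a single reversal increases the number of cycles of
`p ∘ s̃` by at most `2`. -/
theorem stmt_14 (n i j : ℕ) (hn : 1 ≤ n) (a : ℕ → ℤ) (hsigned : IsSignedPerm n a)
    (hi : 1 ≤ i) (hij : i ≤ j) (hjn : j ≤ n)
    (a' : ℕ → ℤ)
    (ha' : ∀ k, a' k = if i ≤ k ∧ k ≤ j then -a (i + j - k) else a k)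
    (p : Equiv.Perm (Ipm n))
    (hp : ∀ x : Ipm n, (p x : ℤ) = if (x : ℤ) = -(n : ℤ) then (n : ℤ) else (x : ℤ) - 1)
    (st st' : Equiv.Perm (Ipm n))
    (hst : ∀ k ≤ 2 * n, ∀ x : Ipm n, (x : ℤ) = seq n a k →
      ((st x : ℤ) = seq n a ((k + 1) % (2 * n + 1))))
    (hst' : ∀ k ≤ 2 * n, ∀ x : Ipm n, (x : ℤ) = seq n a' k →
      ((st' x : ℤ) = seq n a' ((k + 1) % (2 * n + 1)))) :
    cycleCount (p * st') ≤ cycleCount (p * st) + 2 := by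

  have hsigned' : IsSignedPerm n a' := signed_reverse hsigned hi hij hjn ha'
  have hstS : ∀ t : ℕ, st (elt n a hsigned t) = elt n a hsigned (t+1) :=
    elt_st hsigned st hst
  have hstS' : ∀ t : ℕ, st' (elt n a' hsigned' t) = elt n a' hsigned' (t+1) :=
    elt_st hsigned' st' hst'
  have hvalS' : ∀ t, t ≤ 2*n → elt n a' hsigned' t = elt n a hsigned (mIdx n i j t) := by
    intro t ht
    apply Subtype.ext
    rw [elt_val hsigned' t, elt_val hsigned (mIdx n i j t),
      Nat.mod_eq_of_lt (by omega), Nat.mod_eq_of_lt (Nat.lt_succ_of_le (mIdx_le hi hij hjn ht))]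
    exact seq_reverse_eq hi hij hjn hn ha' ht
  set σ : Equiv.Perm (Ipm n) :=
    Equiv.swap (elt n a hsigned (i-1)) (elt n a hsigned (2*n-j)) *
    Equiv.swap (elt n a hsigned (2*n+1-i)) (elt n a hsigned j) with hσdef
  have hσapp : ∀ z, σ z = Equiv.swap (elt n a hsigned (i-1)) (elt n a hsigned (2*n-j))
      (Equiv.swap (elt n a hsigned (2*n+1-i)) (elt n a hsigned j) z) := by
    intro z; rw [hσdef]; rfl
  have hfix : ∀ t, t ≤ 2*n → t ≠ i-1 → t ≠ 2*n+1-i → t ≠ j → t ≠ 2*n-j →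
      σ (elt n a hsigned t) = elt n a hsigned t := by
    intro t ht h1 h2 h3 h4
    rw [hσapp,
      Equiv.swap_apply_of_ne_of_ne (elt_ne hsigned ht (by omega) h2)
        (elt_ne hsigned ht (by omega) h3),
      Equiv.swap_apply_of_ne_of_ne (elt_ne hsigned ht (by omega) h1)
        (elt_ne hsigned ht (by omega) h4)]
  have hA : σ (elt n a hsigned (i-1)) = elt n a hsigned (2*n-j) := by
    rw [hσapp,
      Equiv.swap_apply_of_ne_of_ne (elt_ne hsigned (by omega) (by omega) (by omega))
        (elt_ne hsigned (by omega) (by omega) (by omega)),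
      Equiv.swap_apply_left]
  have hC : σ (elt n a hsigned j) = elt n a hsigned (2*n+1-i) := by
    rw [hσapp, Equiv.swap_apply_right,
      Equiv.swap_apply_of_ne_of_ne (elt_ne hsigned (by omega) (by omega) (by omega))
        (elt_ne hsigned (by omega) (by omega) (by omega))]
  have key : ∀ x : Ipm n, st' x = st (σ x) := by
    intro x
    obtain ⟨k, hk, hxk⟩ := seq_surj hsigned' x
    have hx : x = elt n a' hsigned' k := by
      apply Subtype.ext
      rw [hxk, elt_val hsigned' k, Nat.mod_eq_of_lt (by omega)]
    rw [hx, hstS' k, hvalS' k hk]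
    have hL : elt n a' hsigned' (k+1) = elt n a hsigned (mIdx n i j ((k+1) % (2*n+1))) := by
      rcases Nat.lt_or_ge k (2*n) with hlt | hge
      · rw [Nat.mod_eq_of_lt (by omega)]
        exact hvalS' (k+1) (by omega)
      · have hk2n : k = 2*n := by omega
        subst hk2n
        rw [Nat.mod_self]
        have hm0 : mIdx n i j 0 = 0 := by simp only [mIdx]; split_ifs <;> omega
        rw [hm0]
        apply Subtype.ext
        rw [elt_val hsigned' (2*n+1), elt_val hsigned 0, Nat.mod_self, Nat.zero_mod]
        have h00 := seq_reverse_eq hi hij hjn hn ha' (show (0:ℕ) ≤ 2*n by omega)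
        rwa [hm0] at h00
    rw [hL]
    by_cases hc1 : k + 1 < i
    · rw [Nat.mod_eq_of_lt (by omega)]
      have e1 : mIdx n i j k = k := by simp only [mIdx]; split_ifs <;> omega
      have e2 : mIdx n i j (k+1) = k+1 := by simp only [mIdx]; split_ifs <;> omega
      rw [e1, e2, hfix k (by omega) (by omega) (by omega) (by omega) (by omega), hstS]
    by_cases hc2 : k + 1 = i
    · rw [Nat.mod_eq_of_lt (by omega)]
      have e1 : mIdx n i j k = i-1 := by simp only [mIdx]; split_ifs <;> omega
      have e2 : mIdx n i j (k+1) = 2*n+1-j := by simp only [mIdx]; split_ifs <;> omega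
      rw [e1, e2, hA, hstS, show 2*n+1-j = 2*n-j+1 from by omega]
    by_cases hc3 : k < j
    · rw [Nat.mod_eq_of_lt (by omega)]
      have e1 : mIdx n i j k = 2*n+1+k-(i+j) := by simp only [mIdx]; split_ifs <;> omega
      have e2 : mIdx n i j (k+1) = 2*n+2+k-(i+j) := by simp only [mIdx]; split_ifs <;> omega
      rw [e1, e2, hfix _ (by omega) (by omega) (by omega) (by omega) (by omega), hstS,
        show 2*n+2+k-(i+j) = 2*n+1+k-(i+j)+1 from by omega]
    by_cases hc4 : k = j ∧ j < n
    · obtain ⟨hkj, hjlt⟩ := hc4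
      rw [Nat.mod_eq_of_lt (by omega)]
      have e1 : mIdx n i j k = 2*n+1-i := by simp only [mIdx]; split_ifs <;> omega
      have e2 : mIdx n i j (k+1) = k+1 := by simp only [mIdx]; split_ifs <;> omega
      have hB : σ (elt n a hsigned (2*n+1-i)) = elt n a hsigned j := by
        rw [hσapp, Equiv.swap_apply_left,
          Equiv.swap_apply_of_ne_of_ne (elt_ne hsigned (by omega) (by omega) (by omega))
            (elt_ne hsigned (by omega) (by omega) (by omega))]
      rw [e1, e2, hB, hstS, show k+1 = j+1 from by omega]
    by_cases hc5 : k = j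
    · have hjn' : j = n := by omega
      rw [Nat.mod_eq_of_lt (by omega)]
      have e1 : mIdx n i j k = 2*n+1-i := by simp only [mIdx]; split_ifs <;> omega
      have e2 : mIdx n i j (k+1) = i := by simp only [mIdx]; split_ifs <;> omega
      have hCD : elt n a hsigned j = elt n a hsigned (2*n-j) := by
        rw [show 2*n-j = j from by omega]
      have hB' : σ (elt n a hsigned (2*n+1-i)) = elt n a hsigned (i-1) := by
        rw [hσapp, Equiv.swap_apply_left, hCD, Equiv.swap_apply_right]
      rw [e1, e2, hB', hstS, show i-1+1 = i from by omega]
    by_cases hc6 : k + 1 ≤ 2*n - j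
    · rw [Nat.mod_eq_of_lt (by omega)]
      have e1 : mIdx n i j k = k := by simp only [mIdx]; split_ifs <;> omega
      have e2 : mIdx n i j (k+1) = k+1 := by simp only [mIdx]; split_ifs <;> omega
      rw [e1, e2, hfix k (by omega) (by omega) (by omega) (by omega) (by omega), hstS]
    by_cases hc7 : k = 2*n - j
    · rw [Nat.mod_eq_of_lt (by omega)]
      have e1 : mIdx n i j k = 2*n-j := by simp only [mIdx]; split_ifs <;> omega
      have e2 : mIdx n i j (k+1) = i := by simp only [mIdx]; split_ifs <;> omega
      have hD : σ (elt n a hsigned (2*n-j)) = elt n a hsigned (i-1) := by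
        rw [hσapp,
          Equiv.swap_apply_of_ne_of_ne (elt_ne hsigned (by omega) (by omega) (by omega))
            (elt_ne hsigned (by omega) (by omega) (by omega)),
          Equiv.swap_apply_right]
      rw [e1, e2, hD, hstS, show i-1+1 = i from by omega]
    by_cases hc8 : k ≤ 2*n - i
    · rw [Nat.mod_eq_of_lt (by omega)]
      have e1 : mIdx n i j k = i+j+k-(2*n+1) := by simp only [mIdx]; split_ifs <;> omega
      have e2 : mIdx n i j (k+1) = i+j+k-2*n := by simp only [mIdx]; split_ifs <;> omega
      rw [e1, e2, hfix _ (by omega) (by omega) (by omega) (by omega) (by omega), hstS,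
        show i+j+k-2*n = i+j+k-(2*n+1)+1 from by omega]
    by_cases hc9 : i = 1
    · have hk2n : k = 2*n := by omega
      subst hk2n
      rw [Nat.mod_self]
      have e1 : mIdx n i j (2*n) = j := by simp only [mIdx]; split_ifs <;> omega
      have e2 : mIdx n i j 0 = 0 := by simp only [mIdx]; split_ifs <;> omega
      rw [e1, e2, hC, hstS]
      exact elt_eqmod hsigned (by
        rw [Nat.zero_mod, show 2*n+1-i+1 = 2*n+1 from by omega, Nat.mod_self])
    by_cases hc10 : k = 2*n+1-i
    · rw [Nat.mod_eq_of_lt (by omega)]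
      have e1 : mIdx n i j k = j := by simp only [mIdx]; split_ifs <;> omega
      have e2 : mIdx n i j (k+1) = k+1 := by simp only [mIdx]; split_ifs <;> omega
      rw [e1, e2, hC, hstS, show k+1 = 2*n+1-i+1 from by omega]
    by_cases hc11 : k + 1 ≤ 2*n
    · rw [Nat.mod_eq_of_lt (by omega)]
      have e1 : mIdx n i j k = k := by simp only [mIdx]; split_ifs <;> omega
      have e2 : mIdx n i j (k+1) = k+1 := by simp only [mIdx]; split_ifs <;> omega
      rw [e1, e2, hfix k (by omega) (by omega) (by omega) (by omega) (by omega), hstS]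
    · have hk2n : k = 2*n := by omega
      subst hk2n
      rw [Nat.mod_self]
      have e1 : mIdx n i j (2*n) = 2*n := by simp only [mIdx]; split_ifs <;> omega
      have e2 : mIdx n i j 0 = 0 := by simp only [mIdx]; split_ifs <;> omega
      rw [e1, e2, hfix (2*n) (le_refl _) (by omega) (by omega) (by omega) (by omega), hstS]
      exact elt_eqmod hsigned (by rw [Nat.zero_mod, Nat.mod_self])
  have hperm : p * st' = p * st *
      Equiv.swap (elt n a hsigned (i-1)) (elt n a hsigned (2*n-j)) *
      Equiv.swap (elt n a hsigned (2*n+1-i)) (elt n a hsigned j) := by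
    apply Equiv.ext
    intro x
    simp only [Equiv.Perm.mul_apply]
    rw [key x, hσapp]
  rw [hperm]
  exact cycleCount_mul_swap_swap_le (p * st) _ _ _ _
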